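/- There exist divergent formal power series f(x,y) and h(x) over ℂ with h(0)=0, h ≠ 0, such that f(x, s·h(x)) = s·x² in ℂ[[x]] for every s ∈ ℂ. Concretely: take h(x) = x + ⋯ divergent, let φ(x) be the formal power series determined by h(x)φ(x) = x², and set f(x,y) = φ(x)·y. -/

import Mathlib

/-- A one-variable formal series (given by its coefficients) is convergent:
geometric coefficient bounds. -/
def Conv1 (u : ℕ → ℂ) : Prop := ∃ C : ℝ, ∀ p : ℕ, p ≠ 0 → ‖u p‖ ≤ C ^ p

/-- A two-variable formal power series `∑ a i j • xⁱyʲ` (encoded by its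
coefficient function) is convergent: geometric coefficient bounds. -/
def Conv2 (a : ℕ → ℕ → ℂ) : Prop :=
  ∃ C : ℝ, ∀ i j : ℕ, ¬(i = 0 ∧ j = 0) → ‖a i j‖ ≤ C ^ (i + j)

/-- Convergence of a one-variable formal power series. -/
def ConvPS (h : PowerSeries ℂ) : Prop := Conv1 (fun n => PowerSeries.coeff n h)

/-- The `p`-th coefficient of the formal power series `g(s^σ x, s^τ h(x))`,
where `g` is the two-variable series with coefficients `a i j` and `h(0) = 0`. -/
noncomputable def substCoeff (a : ℕ → ℕ → ℂ) (h : PowerSeries ℂ) (σ τ : ℤ) (s : ℂ)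
    (p : ℕ) : ℂ :=
  ∑ i ∈ Finset.range (p + 1), ∑ j ∈ Finset.range (p + 1),
    a i j * PowerSeries.coeff (p - i) (h ^ j) * s ^ (σ * (i : ℤ) + τ * (j : ℤ))

/-- The coefficients of the formal composition `f(x, u(x))` for `u(0) = 0`. -/
noncomputable def comp2 (a : ℕ → ℕ → ℂ) (u : PowerSeries ℂ) (p : ℕ) : ℂ :=
  ∑ i ∈ Finset.range (p + 1), ∑ j ∈ Finset.range (p + 1),
    a i j * PowerSeries.coeff (p - i) (u ^ j)


/-! Take `b = ∑ n! xⁿ`, `φ = x (1 - x b)` and `h = x (1 - x b)⁻¹`, so that `h φ = x²` and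
`f(x, s h) = s φ h = s x²`. The coefficients of `φ` are `-n!`, and since
`u = (1 - x b)⁻¹` satisfies `u = 1 + x b u` with `b ≥ 0`, the coefficients of `u` are
nonnegative and dominate those of `b`; factorials outgrow every geometric sequence. -/

open PowerSeries Filter

section InvOneSubXMul

variable {K : Type*} [Field K]

lemma inv_one_sub_X_mul_eq (g : K⟦X⟧) :
    (1 - X * g)⁻¹ = 1 + X * g * (1 - X * g)⁻¹ := by
  have hu : (1 - X * g)⁻¹ * (1 - X * g) = 1 :=
    PowerSeries.inv_mul_cancel _ (by simp)
  linear_combination hu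

lemma coeff_succ_inv_one_sub_X_mul (g : K⟦X⟧) (n : ℕ) :
    coeff (n + 1) (1 - X * g)⁻¹ =
      ∑ ij ∈ Finset.HasAntidiagonal.antidiagonal n, coeff ij.1 g * coeff ij.2 (1 - X * g)⁻¹ := by
  conv_lhs => rw [inv_one_sub_X_mul_eq]
  rw [map_add, coeff_one, if_neg n.succ_ne_zero, zero_add, mul_assoc, coeff_succ_X_mul,
    coeff_mul]

variable [PartialOrder K] [IsOrderedRing K]

lemma coeff_inv_one_sub_X_mul_nonneg {g : K⟦X⟧} (hg : ∀ n, 0 ≤ coeff n g) (n : ℕ) :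
    0 ≤ coeff n (1 - X * g)⁻¹ := by
  induction n using Nat.strong_induction_on with
  | _ n ih =>
    cases n with
    | zero => simp
    | succ n =>
      rw [coeff_succ_inv_one_sub_X_mul]
      exact Finset.sum_nonneg fun ij hij =>
        mul_nonneg (hg _) (ih _ (Finset.Nat.antidiagonal.snd_lt hij))

lemma coeff_le_coeff_succ_inv_one_sub_X_mul {g : K⟦X⟧} (hg : ∀ n, 0 ≤ coeff n g) (n : ℕ) :
    coeff n g ≤ coeff (n + 1) (1 - X * g)⁻¹ := by
  rw [coeff_succ_inv_one_sub_X_mul]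
  simpa using Finset.single_le_sum
    (fun ij _ => mul_nonneg (hg ij.1) (coeff_inv_one_sub_X_mul_nonneg hg ij.2))
    (Finset.HasAntidiagonal.mem_antidiagonal.mpr (add_zero n) : (n, 0) ∈ _)

end InvOneSubXMul

lemma exists_pow_add_lt_factorial (C : ℝ) (e : ℕ) : ∃ n : ℕ, C ^ (n + e) < n.factorial := by
  have hlim : Tendsto (fun n : ℕ => C ^ e * (C ^ n / n.factorial)) atTop (nhds 0) := by
    simpa using (FloorSemiring.tendsto_pow_div_factorial_atTop C).const_mul (C ^ e)
  obtain ⟨n, hn⟩ := (hlim.eventually (gt_mem_nhds one_pos)).exists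
  refine ⟨n, ?_⟩
  have hfac : (0 : ℝ) < n.factorial := by positivity
  calc C ^ (n + e) = C ^ e * (C ^ n / n.factorial) * n.factorial := by field_simp; ring
    _ < 1 * n.factorial := by gcongr
    _ = n.factorial := one_mul _

lemma not_conv1_of_factorial_le {u : ℕ → ℂ} (k : ℕ)
    (hu : ∀ n, (n.factorial : ℝ) ≤ ‖u (n + k + 1)‖) : ¬ Conv1 u := by
  rintro ⟨C, hC⟩
  obtain ⟨n, hn⟩ := exists_pow_add_lt_factorial C (k + 1)
  rw [← add_assoc] at hn
  linarith [hu n, hC (n + k + 1) (by omega)]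

lemma not_conv2_of_factorial_le {a : ℕ → ℕ → ℂ} (k j : ℕ)
    (ha : ∀ n, (n.factorial : ℝ) ≤ ‖a (n + k + 1) j‖) : ¬ Conv2 a := by
  rintro ⟨C, hC⟩
  obtain ⟨n, hn⟩ := exists_pow_add_lt_factorial C (k + 1 + j)
  rw [← add_assoc, ← add_assoc] at hn
  linarith [ha n, hC (n + k + 1) j (by omega)]

lemma comp2_eq_coeff_mul (φ u : PowerSeries ℂ) (hu : constantCoeff u = 0) (p : ℕ) :
    comp2 (fun i j => if j = 1 then coeff i φ else 0) u p = coeff p (φ * u) := by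
  rcases p with _ | p
  · simp [comp2, hu]
  · rw [comp2, coeff_mul, Finset.Nat.sum_antidiagonal_eq_sum_range_succ_mk]
    refine Finset.sum_congr rfl fun i _ => ?_
    rw [Finset.sum_eq_single 1 (fun j _ hj => by rw [if_neg hj, zero_mul])
      (fun h => absurd (Finset.mem_range.mpr (by omega)) h), if_pos rfl, pow_one]

noncomputable def factorialSeries : ℝ⟦X⟧ := mk fun n => (n.factorial : ℝ)

lemma coeff_factorialSeries (n : ℕ) : coeff n factorialSeries = n.factorial := coeff_mk _ _

lemma norm_coeff_map_ofReal (p : ℝ⟦X⟧) (n : ℕ) :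
    ‖coeff n (p.map Complex.ofRealHom)‖ = |coeff n p| := by
  rw [coeff_map, Complex.ofRealHom_eq_coe, Complex.norm_real, Real.norm_eq_abs]

/-- Example 3.3 (case `(σ,τ)=(0,1)`): there are divergent series
`f(x,y) = φ(x)·y` and `h(x) = x + ⋯` with `h·φ = x²`, such that
`f(x, s·h(x)) = s·x²` for every `s ∈ ℂ`. -/
theorem counterexample_sigma_zero_tau_one :
    ∃ (h φ : PowerSeries ℂ) (f : ℕ → ℕ → ℂ),
      PowerSeries.constantCoeff h = 0 ∧ h ≠ 0 ∧ PowerSeries.coeff 1 h = 1 ∧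
      ¬ ConvPS h ∧ ¬ ConvPS φ ∧ h * φ = PowerSeries.X ^ 2 ∧
      (∀ i j : ℕ, f i j = if j = 1 then PowerSeries.coeff i φ else 0) ∧
      ¬ Conv2 f ∧
      ∀ (s : ℂ) (p : ℕ), comp2 f (PowerSeries.C s * h) p =
        if p = 2 then s else 0 := by
  set b := factorialSeries
  have hb : ∀ n, 0 ≤ coeff n b := fun n => by rw [coeff_factorialSeries]; positivity
  set h : ℂ⟦X⟧ := (X * (1 - X * b)⁻¹).map Complex.ofRealHom
  set φ : ℂ⟦X⟧ := (X * (1 - X * b)).map Complex.ofRealHom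
  have hcoeff1 : coeff 1 h = 1 := by simp [h]
  have hhφ : h * φ = X ^ 2 := by
    rw [← map_mul, show X * (1 - X * b)⁻¹ * (X * (1 - X * b)) = X ^ 2 by
      rw [mul_mul_mul_comm, PowerSeries.inv_mul_cancel _ (by simp), sq, mul_one], map_pow, map_X]
  have hh : ∀ n, (n.factorial : ℝ) ≤ ‖coeff (n + 1 + 1) h‖ := fun n => by
    rw [norm_coeff_map_ofReal, coeff_succ_X_mul, ← coeff_factorialSeries]
    exact (coeff_le_coeff_succ_inv_one_sub_X_mul hb n).trans (le_abs_self _)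
  have hφ : ∀ n, (n.factorial : ℝ) ≤ ‖coeff (n + 1 + 1) φ‖ := fun n => by
    simp [φ, coeff_succ_X_mul, coeff_one, coeff_factorialSeries, b]
  refine ⟨h, φ, _, by simp [h], fun h0 => by simp [h0] at hcoeff1, hcoeff1,
    not_conv1_of_factorial_le 1 hh, not_conv1_of_factorial_le 1 hφ, hhφ, fun _ _ => rfl,
    not_conv2_of_factorial_le 1 1 (by simpa using hφ), fun s p => ?_⟩
  rw [comp2_eq_coeff_mul φ _ (by simp [h]), mul_left_comm, coeff_C_mul, mul_comm φ, hhφ,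
    coeff_X_pow]
  split_ifs <;> simp
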